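/- Let a : [1, 1+2^L]² → ℂ be continuous and suppose a_{s₁,s₂} = 0 whenever s₁ = 1 or s₂ = 1. Then the two-parameter 2-variation satisfies V²(a_s : s ∈ [1,1+2^L]²) ≤ 2 · Σ_{l₁,l₂ ∈ ℤ₊} ( Σ_{j₁=1}^{2^{l₁}} Σ_{j₂=1}^{2^{l₂}} |Δ_{l₁,l₂,j₁,j₂}(a)|² )^{1/2}, where Δ_{l₁,l₂,j₁,j₂}(a) := a_{1+j₁2^{L-l₁}, 1+j₂2^{L-l₂}} − a_{1+(j₁−1)2^{L-l₁}, 1+j₂2^{L-l₂}} − a_{1+j₁2^{L-l₁}, 1+(j₂−1)2^{L-l₂}} + a_{1+(j₁−1)2^{L-l₁}, 1+(j₂−1)2^{L-l₂}}. -/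

import Mathlib

open Set ENNReal

/-- Two-parameter 2-variation seminorm of `a` over `I ⊆ ℝ × ℝ`: the supremum over finite chains
strictly increasing in the coordinatewise order of the ℓ² sum of consecutive differences. -/
noncomputable def var2two (a : ℝ → ℝ → ℂ) (I : Set (ℝ × ℝ)) : ℝ≥0∞ :=
  ⨆ (J : ℕ) (u : Fin (J + 1) → ℝ × ℝ)
    (_ : ∀ j : Fin J, (u j.castSucc).1 < (u j.succ).1 ∧ (u j.castSucc).2 < (u j.succ).2)
    (_ : ∀ j, u j ∈ I),
    (∑ j : Fin J,
      ((‖a (u j.succ).1 (u j.succ).2 - a (u j.castSucc).1 (u j.castSucc).2‖₊ : ℝ≥0∞)) ^ 2)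
        ^ (1 / 2 : ℝ)

/-!
By continuity of `a`, every chain in the square is the limit of the chains obtained by rounding
its points down to the dyadic grid of mesh `2 ^ (L - m)`, so it suffices to bound chains of a grid
function `b` vanishing on the axes. Such a `b` telescopes over pairs of dyadic levels: the
level-`(n₁, n₂)` piece at a point is the increment of `b` over the `2 ^ n₁ × 2 ^ n₂` cell
containing it if that cell has two odd indices, and `0` otherwise. By Minkowski's inequality the
ℓ²-variation of a chain is at most the sum over levels of the ℓ²-variations of the pieces. Along a
monotone chain a piece changes only when the chain enters a new cell, and it enters each cell at
most once, so the squared variation of a piece is at most four times the sum of its squared cell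
increments.
-/

open Filter Topology Finset NNReal

noncomputable def l2Variation {E : Type*} [SeminormedAddCommGroup E] {J : ℕ}
    (f : Fin (J + 1) → E) : ℝ≥0∞ :=
  (∑ j : Fin J, (‖f j.succ - f j.castSucc‖₊ : ℝ≥0∞) ^ 2) ^ (1 / 2 : ℝ)

theorem ENNReal.L2_sum_le {ι κ : Type*} (s : Finset ι) (t : Finset κ)
    (f : ι → κ → ℝ≥0∞) :
    (∑ j ∈ t, (∑ i ∈ s, f i j) ^ 2) ^ (1 / 2 : ℝ)
      ≤ ∑ i ∈ s, (∑ j ∈ t, f i j ^ 2) ^ (1 / 2 : ℝ) := by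
  classical
  induction s using Finset.cons_induction with
  | empty => simp
  | cons i s hi ih =>
    simp only [sum_cons]
    calc _ ≤ (∑ j ∈ t, f i j ^ 2) ^ (1 / 2 : ℝ)
          + (∑ j ∈ t, (∑ i ∈ s, f i j) ^ 2) ^ (1 / 2 : ℝ) := by
          simpa only [← ENNReal.rpow_natCast, Nat.cast_ofNat] using
            ENNReal.Lp_add_le t (f i) (fun j => ∑ i ∈ s, f i j) one_le_two
      _ ≤ _ := by gcongr

theorem ENNReal.four_rpow_half : (4 : ℝ≥0∞) ^ (1 / 2 : ℝ) = 2 := by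
  rw [show (4 : ℝ≥0∞) = 2 ^ (2 : ℝ) by norm_num, ← ENNReal.rpow_mul]
  norm_num

theorem Monotone.injOn_succ {α : Type*} [PartialOrder α] {J : ℕ} {q : Fin (J + 1) → α}
    (hq : Monotone q) : Set.InjOn (fun j : Fin J => q j.succ) {j | q j.castSucc ≠ q j.succ} := by
  intro j hj j' hj' h
  by_contra hne
  wlog hlt : j < j' generalizing j j'
  · exact this hj' hj h.symm (Ne.symm hne) (lt_of_le_of_ne (not_lt.1 hlt) (Ne.symm hne))
  exact hj' (le_antisymm (hq (Fin.castSucc_le_succ j'))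
    (h.symm.le.trans (hq (Fin.succ_le_castSucc_iff.2 hlt))))

theorem Monotone.injOn_castSucc {α : Type*} [PartialOrder α] {J : ℕ} {q : Fin (J + 1) → α}
    (hq : Monotone q) :
    Set.InjOn (fun j : Fin J => q j.castSucc) {j | q j.castSucc ≠ q j.succ} := by
  intro j hj j' hj' h
  by_contra hne
  wlog hlt : j < j' generalizing j j'
  · exact this hj' hj h.symm (Ne.symm hne) (lt_of_le_of_ne (not_lt.1 hlt) (Ne.symm hne))
  exact hj (le_antisymm (hq (Fin.castSucc_le_succ j))
    ((hq (Fin.succ_le_castSucc_iff.2 hlt)).trans h.symm.le))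

section l2Variation

variable {E : Type*} [SeminormedAddCommGroup E] {J : ℕ}

theorem continuous_l2Variation : Continuous (l2Variation : (Fin (J + 1) → E) → ℝ≥0∞) :=
  ENNReal.continuous_rpow_const.comp <| continuous_finsetSum _ fun j _ =>
    (ENNReal.continuous_pow 2).comp <| ENNReal.continuous_coe.comp
      ((continuous_apply j.succ).sub (continuous_apply j.castSucc)).nnnorm

theorem l2Variation_sum_le {ι : Type*} (s : Finset ι) (f : ι → Fin (J + 1) → E) :
    l2Variation (fun j => ∑ i ∈ s, f i j) ≤ ∑ i ∈ s, l2Variation (f i) := by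
  calc l2Variation (fun j => ∑ i ∈ s, f i j)
      ≤ (∑ j : Fin J, (∑ i ∈ s, (‖f i j.succ - f i j.castSucc‖₊ : ℝ≥0∞)) ^ 2) ^ (1 / 2 : ℝ) := by
        unfold l2Variation
        gcongr with j
        rw [← sum_sub_distrib]
        exact_mod_cast nnnorm_sum_le _ _
    _ ≤ _ := ENNReal.L2_sum_le s univ _

theorem sum_comp_le_sum_of_injOn {ι α : Type*} {A : Finset ι} {σ : ι → α}
    (hσ : Set.InjOn σ A) (g : α → ℝ≥0∞) {box : Finset α} (hbox : ∀ j, g (σ j) ≠ 0 → σ j ∈ box) :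
    ∑ j ∈ A, g (σ j) ≤ ∑ p ∈ box, g p := by
  classical
  rw [← sum_image hσ]
  exact sum_le_sum_of_ne_zero fun p hp hne => by
    obtain ⟨j, -, rfl⟩ := mem_image.1 hp
    exact hbox j hne

theorem l2Variation_comp_le {α : Type*} [PartialOrder α] {q : Fin (J + 1) → α} (hq : Monotone q)
    (G : α → E) {box : Finset α} (hbox : ∀ j, G (q j) ≠ 0 → q j ∈ box) :
    l2Variation (fun j => G (q j)) ≤ 2 * (∑ p ∈ box, (‖G p‖₊ : ℝ≥0∞) ^ 2) ^ (1 / 2 : ℝ) := by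
  classical
  set g : α → ℝ≥0∞ := fun p => (‖G p‖₊ : ℝ≥0∞) ^ 2
  have hg : ∀ j, g (q j) ≠ 0 → q j ∈ box := fun j hj => hbox j fun h => hj (by simp [g, h])
  set A := univ.filter fun j : Fin J => q j.castSucc ≠ q j.succ
  have hsq : ∑ j : Fin J, (‖G (q j.succ) - G (q j.castSucc)‖₊ : ℝ≥0∞) ^ 2
      ≤ 4 * ∑ p ∈ box, g p := calc
    _ = ∑ j ∈ A, (‖G (q j.succ) - G (q j.castSucc)‖₊ : ℝ≥0∞) ^ 2 :=
        (sum_subset (subset_univ A) fun j _ hj => by simp_all [A]).symm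
    _ ≤ ∑ j ∈ A, 2 * (g (q j.succ) + g (q j.castSucc)) := by
        gcongr with j
        have h : ‖G (q j.succ) - G (q j.castSucc)‖₊ ^ 2
            ≤ 2 * (‖G (q j.succ)‖₊ ^ 2 + ‖G (q j.castSucc)‖₊ ^ 2) :=
          (pow_le_pow_left' (nnnorm_sub_le _ _) 2).trans add_sq_le
        simp only [g]
        exact_mod_cast h
    _ = 2 * (∑ j ∈ A, g (q j.succ) + ∑ j ∈ A, g (q j.castSucc)) := by
        rw [← mul_sum, sum_add_distrib]
    _ ≤ 2 * (∑ p ∈ box, g p + ∑ p ∈ box, g p) := by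
        gcongr
        · exact sum_comp_le_sum_of_injOn (by simpa [A] using hq.injOn_succ) g fun j => hg _
        · exact sum_comp_le_sum_of_injOn (by simpa [A] using hq.injOn_castSucc) g fun j => hg _
    _ = 4 * ∑ p ∈ box, g p := by ring
  calc l2Variation (fun j => G (q j)) ≤ (4 * ∑ p ∈ box, g p) ^ (1 / 2 : ℝ) := by
        unfold l2Variation; gcongr
    _ = _ := by rw [ENNReal.mul_rpow_of_nonneg _ _ (by norm_num), ENNReal.four_rpow_half]

end l2Variation

def rectIncr {α β G : Type*} [AddCommGroup G] (f : α → β → G) (x x' : α) (y y' : β) : G :=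
  f x y - f x' y - f x y' + f x' y'

theorem sum_range_sum_range_rectIncr {G : Type*} [AddCommGroup G] (F : ℕ → ℕ → G) (m : ℕ) :
    ∑ n₁ ∈ range m, ∑ n₂ ∈ range m, rectIncr F n₁ (n₁ + 1) n₂ (n₂ + 1) = rectIncr F 0 m 0 m := by
  have inner : ∀ n₁, ∑ n₂ ∈ range m, rectIncr F n₁ (n₁ + 1) n₂ (n₂ + 1)
      = (F n₁ 0 - F n₁ m) - (F (n₁ + 1) 0 - F (n₁ + 1) m) := fun n₁ => calc
    _ = ∑ n₂ ∈ range m, ((F n₁ n₂ - F (n₁ + 1) n₂) - (F n₁ (n₂ + 1) - F (n₁ + 1) (n₂ + 1))) :=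
        sum_congr rfl fun n₂ _ => by simp only [rectIncr]; abel
    _ = _ := by rw [sum_range_sub' (fun n₂ => F n₁ n₂ - F (n₁ + 1) n₂)]; abel
  rw [sum_congr rfl fun n₁ _ => inner n₁, sum_range_sub' (fun n₁ => F n₁ 0 - F n₁ m), rectIncr]
  abel

theorem two_pow_succ_mul_div_two_of_even {n p : ℕ} (hp : p % 2 = 0) :
    2 ^ (n + 1) * (p / 2) = 2 ^ n * p := by
  rw [pow_succ, mul_assoc]; congr 1; omega

theorem two_pow_succ_mul_div_two_of_odd {n p : ℕ} (hp : p % 2 = 1) :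
    2 ^ (n + 1) * (p / 2) = 2 ^ n * (p - 1) := by
  rw [pow_succ, mul_assoc]; congr 1; omega

theorem div_two_pow_mem_Icc {m n x : ℕ} (hn : n ≤ m) (hx : x < 2 ^ m) (hodd : x / 2 ^ n % 2 = 1) :
    x / 2 ^ n ∈ Finset.Icc 1 (2 ^ (m - n)) := by
  have hlt : x / 2 ^ n < 2 ^ (m - n) := by
    rwa [Nat.div_lt_iff_lt_mul (by positivity), ← pow_add, Nat.sub_add_cancel hn]
  rw [Finset.mem_Icc]
  generalize x / 2 ^ n = p at hodd hlt
  omega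

section Discrete

variable {E : Type*} [SeminormedAddCommGroup E] (b : ℕ → ℕ → E)

def cellIncr (n₁ n₂ j₁ j₂ : ℕ) : E :=
  rectIncr b (2 ^ n₁ * j₁) (2 ^ n₁ * (j₁ - 1)) (2 ^ n₂ * j₂) (2 ^ n₂ * (j₂ - 1))

/-- The increment of `b` between the roundings of a point down to multiples of `2 ^ n` and of
`2 ^ (n + 1)`, as a function of the level-`n` indices `p = (x / 2 ^ n₁, y / 2 ^ n₂)` of the
point. -/
def levelIncr (n₁ n₂ : ℕ) (p : ℕ × ℕ) : E :=
  rectIncr b (2 ^ n₁ * p.1) (2 ^ (n₁ + 1) * (p.1 / 2)) (2 ^ n₂ * p.2) (2 ^ (n₂ + 1) * (p.2 / 2))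

theorem levelIncr_eq_zero {n₁ n₂ : ℕ} {p : ℕ × ℕ} (hp : p.1 % 2 = 0 ∨ p.2 % 2 = 0) :
    levelIncr b n₁ n₂ p = 0 := by
  rcases hp with hp | hp <;>
    simp only [levelIncr, rectIncr, two_pow_succ_mul_div_two_of_even hp] <;> abel

theorem levelIncr_eq_cellIncr {n₁ n₂ : ℕ} {p : ℕ × ℕ} (hp₁ : p.1 % 2 = 1) (hp₂ : p.2 % 2 = 1) :
    levelIncr b n₁ n₂ p = cellIncr b n₁ n₂ p.1 p.2 := by
  rw [levelIncr, cellIncr, two_pow_succ_mul_div_two_of_odd hp₁, two_pow_succ_mul_div_two_of_odd hp₂]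

theorem nnnorm_levelIncr_le (n₁ n₂ : ℕ) (p : ℕ × ℕ) :
    ‖levelIncr b n₁ n₂ p‖₊ ≤ ‖cellIncr b n₁ n₂ p.1 p.2‖₊ := by
  by_cases hp : p.1 % 2 = 0 ∨ p.2 % 2 = 0
  · simp [levelIncr_eq_zero b hp]
  · rw [levelIncr_eq_cellIncr b (by omega) (by omega)]

theorem eq_sum_levelIncr {m : ℕ} (hb₁ : ∀ x < 2 ^ m, b x 0 = 0) (hb₂ : ∀ y < 2 ^ m, b 0 y = 0)
    {x y : ℕ} (hx : x < 2 ^ m) (hy : y < 2 ^ m) :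
    b x y = ∑ n₁ ∈ range m, ∑ n₂ ∈ range m, levelIncr b n₁ n₂ (x / 2 ^ n₁, y / 2 ^ n₂) := by
  set F : ℕ → ℕ → E := fun n₁ n₂ => b (2 ^ n₁ * (x / 2 ^ n₁)) (2 ^ n₂ * (y / 2 ^ n₂))
  have hF : ∀ n₁ n₂,
      levelIncr b n₁ n₂ (x / 2 ^ n₁, y / 2 ^ n₂) = rectIncr F n₁ (n₁ + 1) n₂ (n₂ + 1) :=
    fun n₁ n₂ => by simp only [levelIncr, rectIncr, F, Nat.div_div_eq_div_mul, ← pow_succ]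
  rw [sum_congr rfl fun n₁ _ => sum_congr rfl fun n₂ _ => hF n₁ n₂, sum_range_sum_range_rectIncr]
  simp only [rectIncr, F, Nat.div_eq_of_lt hx, Nat.div_eq_of_lt hy, pow_zero, Nat.div_one, one_mul,
    mul_zero, hb₁ x hx, hb₂ y hy, hb₁ 0 (by positivity)]
  abel

theorem l2Variation_levelIncr_le {m n₁ n₂ J : ℕ} (hn₁ : n₁ ≤ m) (hn₂ : n₂ ≤ m)
    {k : Fin (J + 1) → ℕ × ℕ} (hk : Monotone k) (hkm : ∀ j, (k j).1 < 2 ^ m ∧ (k j).2 < 2 ^ m) :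
    l2Variation (fun j => levelIncr b n₁ n₂ ((k j).1 / 2 ^ n₁, (k j).2 / 2 ^ n₂))
      ≤ 2 * (∑ j₁ ∈ Finset.Icc 1 (2 ^ (m - n₁)), ∑ j₂ ∈ Finset.Icc 1 (2 ^ (m - n₂)),
          (‖cellIncr b n₁ n₂ j₁ j₂‖₊ : ℝ≥0∞) ^ 2) ^ (1 / 2 : ℝ) := by
  have hq : Monotone fun j => ((k j).1 / 2 ^ n₁, (k j).2 / 2 ^ n₂) := fun i j hij =>
    ⟨Nat.div_le_div_right (hk hij).1, Nat.div_le_div_right (hk hij).2⟩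
  refine (l2Variation_comp_le hq (levelIncr b n₁ n₂)
    (box := Finset.Icc 1 (2 ^ (m - n₁)) ×ˢ Finset.Icc 1 (2 ^ (m - n₂))) fun j hj => ?_).trans ?_
  · have hodd : ¬ ((k j).1 / 2 ^ n₁ % 2 = 0 ∨ (k j).2 / 2 ^ n₂ % 2 = 0) :=
      fun h => hj (levelIncr_eq_zero b h)
    exact mem_product.2 ⟨div_two_pow_mem_Icc hn₁ (hkm j).1 (by omega),
      div_two_pow_mem_Icc hn₂ (hkm j).2 (by omega)⟩
  · rw [sum_product]
    gcongr with j₁ _ j₂ _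
    exact_mod_cast nnnorm_levelIncr_le b n₁ n₂ (j₁, j₂)

theorem l2Variation_le_sum_cellIncr {m J : ℕ} (hb₁ : ∀ x < 2 ^ m, b x 0 = 0)
    (hb₂ : ∀ y < 2 ^ m, b 0 y = 0) {k : Fin (J + 1) → ℕ × ℕ} (hk : Monotone k)
    (hkm : ∀ j, (k j).1 < 2 ^ m ∧ (k j).2 < 2 ^ m) :
    l2Variation (fun j => b (k j).1 (k j).2)
      ≤ 2 * ∑ n₁ ∈ range m, ∑ n₂ ∈ range m,
        (∑ j₁ ∈ Finset.Icc 1 (2 ^ (m - n₁)), ∑ j₂ ∈ Finset.Icc 1 (2 ^ (m - n₂)),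
          (‖cellIncr b n₁ n₂ j₁ j₂‖₊ : ℝ≥0∞) ^ 2) ^ (1 / 2 : ℝ) := by
  have hdecomp : (fun j => b (k j).1 (k j).2) = fun j => ∑ n ∈ range m ×ˢ range m,
      levelIncr b n.1 n.2 ((k j).1 / 2 ^ n.1, (k j).2 / 2 ^ n.2) := by
    ext j
    rw [sum_product]
    exact eq_sum_levelIncr b hb₁ hb₂ (hkm j).1 (hkm j).2
  rw [hdecomp, ← sum_product', mul_sum]
  refine (l2Variation_sum_le _ _).trans (sum_le_sum fun n hn => ?_)
  rw [mem_product, Finset.mem_range, Finset.mem_range] at hn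
  exact l2Variation_levelIncr_le b hn.1.le hn.2.le hk hkm

end Discrete

section Grid

noncomputable def dyadicPt (L l : ℕ) (t : ℝ) : ℝ := 1 + t * 2 ^ ((L : ℝ) - l)

theorem two_pow_mul_two_rpow_sub (L m : ℕ) : (2 : ℝ) ^ m * 2 ^ ((L : ℝ) - m) = 2 ^ L := by
  rw [← Real.rpow_natCast, ← Real.rpow_add two_pos, add_sub_cancel, Real.rpow_natCast]

theorem dyadicPt_two_pow_mul {L m n : ℕ} (hn : n ≤ m) (t : ℝ) :
    dyadicPt L m (2 ^ n * t) = dyadicPt L (m - n) t := by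
  rw [dyadicPt, dyadicPt, Nat.cast_sub hn, mul_comm _ t, mul_assoc, ← Real.rpow_natCast,
    ← Real.rpow_add two_pos]
  ring_nf

theorem dyadicPt_mem {L m i : ℕ} (hi : i ≤ 2 ^ m) :
    dyadicPt L m i ∈ Set.Icc (1 : ℝ) (1 + 2 ^ L) := by
  have h : (i : ℝ) * 2 ^ ((L : ℝ) - m) ≤ 2 ^ m * 2 ^ ((L : ℝ) - m) := by
    gcongr; exact_mod_cast hi
  rw [two_pow_mul_two_rpow_sub] at h
  exact ⟨le_add_of_nonneg_right (by positivity), by rw [dyadicPt]; linarith⟩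

theorem tendsto_two_rpow_sub (L : ℕ) :
    Tendsto (fun m : ℕ => (2 : ℝ) ^ ((L : ℝ) - m)) atTop (𝓝 0) := by
  have h : (fun m : ℕ => (2 : ℝ) ^ ((L : ℝ) - m)) = fun m => 2 ^ L * (1 / 2) ^ m := by
    ext m
    rw [Real.rpow_sub two_pos, Real.rpow_natCast, Real.rpow_natCast, one_div_pow, mul_one_div]
  rw [h]
  simpa using ((_root_.tendsto_pow_atTop_nhds_zero_of_lt_one (by norm_num : (0 : ℝ) ≤ 1 / 2)
    (by norm_num)).const_mul ((2 : ℝ) ^ L))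

noncomputable def gridIdx (L m : ℕ) (x : ℝ) : ℕ :=
  min ⌊(x - 1) / 2 ^ ((L : ℝ) - m)⌋₊ (2 ^ m - 1)

theorem gridIdx_lt (L m : ℕ) (x : ℝ) : gridIdx L m x < 2 ^ m :=
  (min_le_right _ _).trans_lt (Nat.sub_lt (by positivity) one_pos)

theorem gridIdx_mono (L m : ℕ) : Monotone (gridIdx L m) := fun _ _ hxy =>
  min_le_min_right _ (Nat.floor_le_floor (by gcongr))

theorem dyadicPt_gridIdx_le {L m : ℕ} {x : ℝ} (hx : 1 ≤ x) : dyadicPt L m (gridIdx L m x) ≤ x := by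
  have hh : 0 < (2 : ℝ) ^ ((L : ℝ) - m) := by positivity
  have h : (gridIdx L m x : ℝ) ≤ (x - 1) / 2 ^ ((L : ℝ) - m) :=
    (Nat.cast_le.2 (min_le_left _ _)).trans (Nat.floor_le (by positivity))
  rw [le_div_iff₀ hh] at h
  rw [dyadicPt]
  linarith

theorem sub_le_dyadicPt_gridIdx {L m : ℕ} {x : ℝ} (hx : x ≤ 1 + 2 ^ L) :
    x - 2 ^ ((L : ℝ) - m) ≤ dyadicPt L m (gridIdx L m x) := by
  have hh : 0 < (2 : ℝ) ^ ((L : ℝ) - m) := by positivity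
  have htop : (x - 1) / 2 ^ ((L : ℝ) - m) ≤ 2 ^ m := by
    rw [div_le_iff₀ hh, two_pow_mul_two_rpow_sub]; linarith
  have h : (x - 1) / 2 ^ ((L : ℝ) - m) - 1 ≤ gridIdx L m x := by
    rw [gridIdx, Nat.cast_min]
    refine le_min (Nat.sub_one_lt_floor _).le ?_
    rw [Nat.cast_sub Nat.one_le_two_pow]
    push_cast
    linarith
  have h' := mul_le_mul_of_nonneg_right h hh.le
  rw [sub_mul, div_mul_cancel₀ _ hh.ne'] at h'
  rw [dyadicPt]
  linarith

theorem tendsto_dyadicPt_gridIdx {L : ℕ} {x : ℝ} (hx : x ∈ Set.Icc (1 : ℝ) (1 + 2 ^ L)) :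
    Tendsto (fun m => dyadicPt L m (gridIdx L m x)) atTop (𝓝 x) :=
  tendsto_of_tendsto_of_tendsto_of_le_of_le
    (by simpa using tendsto_const_nhds.sub (tendsto_two_rpow_sub L)) tendsto_const_nhds
    (fun _ => sub_le_dyadicPt_gridIdx hx.2) (fun _ => dyadicPt_gridIdx_le hx.1)

variable {E : Type*} [SeminormedAddCommGroup E]

theorem tendsto_l2Variation_dyadicPt_gridIdx {L J : ℕ} {a : ℝ → ℝ → E}
    (ha : ContinuousOn (fun p : ℝ × ℝ => a p.1 p.2)
      (Set.Icc 1 (1 + 2 ^ L) ×ˢ Set.Icc 1 (1 + 2 ^ L)))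
    {u : Fin (J + 1) → ℝ × ℝ}
    (hu : ∀ j, u j ∈ Set.Icc (1 : ℝ) (1 + 2 ^ L) ×ˢ Set.Icc 1 (1 + 2 ^ L)) :
    Tendsto (fun m => l2Variation fun j =>
        a (dyadicPt L m (gridIdx L m (u j).1)) (dyadicPt L m (gridIdx L m (u j).2)))
      atTop (𝓝 (l2Variation fun j => a (u j).1 (u j).2)) := by
  refine (continuous_l2Variation.tendsto _).comp (tendsto_pi_nhds.2 fun j => ?_)
  have hpt : Tendsto
      (fun m => (dyadicPt L m (gridIdx L m (u j).1), dyadicPt L m (gridIdx L m (u j).2)))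
      atTop (𝓝[Set.Icc 1 (1 + 2 ^ L) ×ˢ Set.Icc 1 (1 + 2 ^ L)] (u j)) :=
    tendsto_nhdsWithin_iff.2 ⟨(tendsto_dyadicPt_gridIdx (hu j).1).prodMk_nhds
      (tendsto_dyadicPt_gridIdx (hu j).2), Eventually.of_forall fun m =>
        ⟨dyadicPt_mem (gridIdx_lt L m _).le, dyadicPt_mem (gridIdx_lt L m _).le⟩⟩
  exact (ha _ (hu j)).tendsto.comp hpt

noncomputable def dyadicSquareFn (L : ℕ) (a : ℝ → ℝ → E) (l₁ l₂ : ℕ) : ℝ≥0∞ :=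
  (∑ j₁ ∈ Finset.Icc (1 : ℕ) (2 ^ l₁), ∑ j₂ ∈ Finset.Icc (1 : ℕ) (2 ^ l₂),
    (‖rectIncr a (dyadicPt L l₁ j₁) (dyadicPt L l₁ (j₁ - 1))
      (dyadicPt L l₂ j₂) (dyadicPt L l₂ (j₂ - 1))‖₊ : ℝ≥0∞) ^ 2) ^ (1 / 2 : ℝ)

theorem sum_cellIncr_dyadicPt {L m n₁ n₂ : ℕ} (hn₁ : n₁ ≤ m) (hn₂ : n₂ ≤ m) (a : ℝ → ℝ → E) :
    (∑ j₁ ∈ Finset.Icc 1 (2 ^ (m - n₁)), ∑ j₂ ∈ Finset.Icc 1 (2 ^ (m - n₂)),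
      (‖cellIncr (fun i₁ i₂ : ℕ => a (dyadicPt L m i₁) (dyadicPt L m i₂)) n₁ n₂ j₁ j₂‖₊
        : ℝ≥0∞) ^ 2) ^ (1 / 2 : ℝ)
      = dyadicSquareFn L a (m - n₁) (m - n₂) := by
  unfold dyadicSquareFn
  congr 1
  refine sum_congr rfl fun j₁ hj₁ => sum_congr rfl fun j₂ hj₂ => ?_
  rw [Finset.mem_Icc] at hj₁ hj₂
  simp only [cellIncr, rectIncr, Nat.cast_mul, Nat.cast_pow, Nat.cast_ofNat, Nat.cast_sub hj₁.1,
    Nat.cast_sub hj₂.1, Nat.cast_one, dyadicPt_two_pow_mul hn₁, dyadicPt_two_pow_mul hn₂]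

end Grid

theorem sum_range_sum_range_le_tsum_pnat (f : ℕ → ℕ → ℝ≥0∞) (m : ℕ) :
    ∑ n₁ ∈ range m, ∑ n₂ ∈ range m, f (m - n₁) (m - n₂) ≤ ∑' l : ℕ+ × ℕ+, f l.1 l.2 := by
  have reflect : ∀ g : ℕ → ℝ≥0∞, ∑ n ∈ range m, g (m - n) = ∑ n ∈ range m, g (n + 1) := fun g =>
    calc _ = ∑ n ∈ range m, g (m - 1 - n + 1) := sum_congr rfl fun n hn =>
          congrArg g (by rw [Finset.mem_range] at hn; omega)
      _ = _ := sum_range_reflect (fun n => g (n + 1)) m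
  rw [(reflect fun n₁ => ∑ n₂ ∈ range m, f n₁ (m - n₂)).trans
    (sum_congr rfl fun n₁ _ => reflect (f (n₁ + 1))), ← sum_product']
  calc _ ≤ ∑' n : ℕ × ℕ, f (n.1 + 1) (n.2 + 1) := ENNReal.sum_le_tsum _
    _ ≤ _ := ENNReal.tsum_comp_le_tsum_of_injective
      (Nat.succPNat_injective.prodMap Nat.succPNat_injective) (fun l : ℕ+ × ℕ+ => f l.1 l.2)

theorem stmt1_general (L : ℕ) (a : ℝ → ℝ → ℂ)
    (ha : ContinuousOn (fun p : ℝ × ℝ => a p.1 p.2)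
      (Set.Icc 1 (1 + 2 ^ L) ×ˢ Set.Icc 1 (1 + 2 ^ L)))
    (hvan : ∀ s₁ ∈ Set.Icc (1 : ℝ) (1 + 2 ^ L), ∀ s₂ ∈ Set.Icc (1 : ℝ) (1 + 2 ^ L),
      (s₁ = 1 ∨ s₂ = 1) → a s₁ s₂ = 0) :
    var2two a (Set.Icc (1 : ℝ) (1 + 2 ^ L) ×ˢ Set.Icc (1 : ℝ) (1 + 2 ^ L)) ≤
      2 * ∑' l : ℕ+ × ℕ+,
        (∑ j₁ ∈ Finset.Icc (1 : ℕ) (2 ^ (l.1 : ℕ)), ∑ j₂ ∈ Finset.Icc (1 : ℕ) (2 ^ (l.2 : ℕ)),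
            ((‖a (1 + (j₁ : ℝ) * (2 : ℝ) ^ ((L : ℝ) - ((l.1 : ℕ) : ℝ)))
                  (1 + (j₂ : ℝ) * (2 : ℝ) ^ ((L : ℝ) - ((l.2 : ℕ) : ℝ)))
                - a (1 + ((j₁ : ℝ) - 1) * (2 : ℝ) ^ ((L : ℝ) - ((l.1 : ℕ) : ℝ)))
                  (1 + (j₂ : ℝ) * (2 : ℝ) ^ ((L : ℝ) - ((l.2 : ℕ) : ℝ)))
                - a (1 + (j₁ : ℝ) * (2 : ℝ) ^ ((L : ℝ) - ((l.1 : ℕ) : ℝ)))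
                  (1 + ((j₂ : ℝ) - 1) * (2 : ℝ) ^ ((L : ℝ) - ((l.2 : ℕ) : ℝ)))
                + a (1 + ((j₁ : ℝ) - 1) * (2 : ℝ) ^ ((L : ℝ) - ((l.1 : ℕ) : ℝ)))
                  (1 + ((j₂ : ℝ) - 1) * (2 : ℝ) ^ ((L : ℝ) - ((l.2 : ℕ) : ℝ)))‖₊ : ℝ≥0∞)) ^ 2)
          ^ (1 / 2 : ℝ) := by
  change var2two a _ ≤ 2 * ∑' l : ℕ+ × ℕ+, dyadicSquareFn L a l.1 l.2
  refine iSup_le fun J => iSup_le fun u => iSup_le fun hu => iSup_le fun hmem => ?_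
  have hu_mono : Monotone u := Fin.monotone_iff_le_succ.2 fun j => ⟨(hu j).1.le, (hu j).2.le⟩
  refine le_of_tendsto' (tendsto_l2Variation_dyadicPt_gridIdx ha hmem) fun m => ?_
  have hone : dyadicPt L m (0 : ℕ) = 1 := by simp [dyadicPt]
  have h₀ : dyadicPt L m (0 : ℕ) ∈ Set.Icc (1 : ℝ) (1 + 2 ^ L) := dyadicPt_mem (Nat.zero_le _)
  have hb₁ : ∀ x : ℕ, x < 2 ^ m → a (dyadicPt L m x) (dyadicPt L m (0 : ℕ)) = 0 :=
    fun x hx => hvan _ (dyadicPt_mem hx.le) _ h₀ (Or.inr hone)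
  have hb₂ : ∀ y : ℕ, y < 2 ^ m → a (dyadicPt L m (0 : ℕ)) (dyadicPt L m y) = 0 :=
    fun y hy => hvan _ h₀ _ (dyadicPt_mem hy.le) (Or.inl hone)
  have hk : Monotone fun j => (gridIdx L m (u j).1, gridIdx L m (u j).2) := fun i j hij =>
    ⟨gridIdx_mono L m (hu_mono hij).1, gridIdx_mono L m (hu_mono hij).2⟩
  calc _ ≤ _ := l2Variation_le_sum_cellIncr (fun i₁ i₂ : ℕ => a (dyadicPt L m i₁) (dyadicPt L m i₂))
        hb₁ hb₂ hk fun j => ⟨gridIdx_lt L m _, gridIdx_lt L m _⟩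
    _ = 2 * ∑ n₁ ∈ range m, ∑ n₂ ∈ range m, dyadicSquareFn L a (m - n₁) (m - n₂) := by
        congr 1
        exact sum_congr rfl fun n₁ h₁ => sum_congr rfl fun n₂ h₂ => sum_cellIncr_dyadicPt
          (Finset.mem_range.1 h₁).le (Finset.mem_range.1 h₂).le a
    _ ≤ _ := by gcongr; exact sum_range_sum_range_le_tsum_pnat _ m

/-- Two-parameter Rademacher–Menshov inequality: if `a` is continuous on `[1, 1+2^L]²` and
vanishes whenever one of its arguments equals `1`, then the two-parameter 2-variation is
controlled by the dyadic square functions. -/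
theorem stmt1 (L : ℕ) (hL : 0 < L) (a : ℝ → ℝ → ℂ)
    (ha : ContinuousOn (fun p : ℝ × ℝ => a p.1 p.2)
      (Set.Icc 1 (1 + 2 ^ L) ×ˢ Set.Icc 1 (1 + 2 ^ L)))
    (hvan : ∀ s₁ ∈ Set.Icc (1 : ℝ) (1 + 2 ^ L), ∀ s₂ ∈ Set.Icc (1 : ℝ) (1 + 2 ^ L),
      (s₁ = 1 ∨ s₂ = 1) → a s₁ s₂ = 0) :
    var2two a (Set.Icc (1 : ℝ) (1 + 2 ^ L) ×ˢ Set.Icc (1 : ℝ) (1 + 2 ^ L)) ≤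
      2 * ∑' l : ℕ+ × ℕ+,
        (∑ j₁ ∈ Finset.Icc (1 : ℕ) (2 ^ (l.1 : ℕ)), ∑ j₂ ∈ Finset.Icc (1 : ℕ) (2 ^ (l.2 : ℕ)),
            ((‖a (1 + (j₁ : ℝ) * (2 : ℝ) ^ ((L : ℝ) - ((l.1 : ℕ) : ℝ)))
                  (1 + (j₂ : ℝ) * (2 : ℝ) ^ ((L : ℝ) - ((l.2 : ℕ) : ℝ)))
                - a (1 + ((j₁ : ℝ) - 1) * (2 : ℝ) ^ ((L : ℝ) - ((l.1 : ℕ) : ℝ)))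
                  (1 + (j₂ : ℝ) * (2 : ℝ) ^ ((L : ℝ) - ((l.2 : ℕ) : ℝ)))
                - a (1 + (j₁ : ℝ) * (2 : ℝ) ^ ((L : ℝ) - ((l.1 : ℕ) : ℝ)))
                  (1 + ((j₂ : ℝ) - 1) * (2 : ℝ) ^ ((L : ℝ) - ((l.2 : ℕ) : ℝ)))
                + a (1 + ((j₁ : ℝ) - 1) * (2 : ℝ) ^ ((L : ℝ) - ((l.1 : ℕ) : ℝ)))
                  (1 + ((j₂ : ℝ) - 1) * (2 : ℝ) ^ ((L : ℝ) - ((l.2 : ℕ) : ℝ)))‖₊ : ℝ≥0∞)) ^ 2)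
          ^ (1 / 2 : ℝ) :=
  stmt1_general L a ha hvan
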